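/- For every finite set P of propositional variables, the formula ⋀_{p∈P} p ∧ □⋀_{p∈P} p is satisfiable and complete for KD4 and for S4. Moreover, every formula ψ with P(ψ) = ∅ is complete for KD4 and for S4. -/

import Mathlib

/-- Modal formulas in negation normal form, as in the paper:
φ ::= ⊥ | ⊤ | p | ¬p | φ∧φ | φ∨φ | □φ | ◇φ. -/
inductive Form : Type where
  | bot : Form
  | top : Form
  | pos : ℕ → Form
  | npos : ℕ → Form
  | and : Form → Form → Form
  | or : Form → Form → Form
  | box : Form → Form
  | dia : Form → Form
deriving DecidableEq

namespace Form

/-- Negation, defined as usual (by De Morgan dualities). -/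
def neg : Form → Form
  | bot => top
  | top => bot
  | pos p => npos p
  | npos p => pos p
  | and φ ψ => or φ.neg ψ.neg
  | or φ ψ => and φ.neg ψ.neg
  | box φ => dia φ.neg
  | dia φ => box φ.neg

/-- Implication φ → ψ, defined as usual. -/
def imp (φ ψ : Form) : Form := or φ.neg ψ

/-- Bi-implication φ ↔ ψ, defined as usual. -/
def biimp (φ ψ : Form) : Form := and (imp φ ψ) (imp ψ φ)

/-- P(φ): the set of propositional variables occurring in φ. -/
def vars : Form → Finset ℕ
  | bot => ∅
  | top => ∅
  | pos p => {p}
  | npos p => {p}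
  | and φ ψ => φ.vars ∪ ψ.vars
  | or φ ψ => φ.vars ∪ ψ.vars
  | box φ => φ.vars
  | dia φ => φ.vars

/-- Modal depth. -/
def md : Form → ℕ
  | bot => 0
  | top => 0
  | pos _ => 0
  | npos _ => 0
  | and φ ψ => max φ.md ψ.md
  | or φ ψ => max φ.md ψ.md
  | box φ => φ.md + 1
  | dia φ => φ.md + 1

/-- sub(φ): the set of subformulas of φ. -/
def subf : Form → Finset Form
  | bot => {bot}
  | top => {top}
  | pos p => {pos p}
  | npos p => {npos p}
  | and φ ψ => insert (and φ ψ) (φ.subf ∪ ψ.subf)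
  | or φ ψ => insert (or φ ψ) (φ.subf ∪ ψ.subf)
  | box φ => insert (box φ) φ.subf
  | dia φ => insert (dia φ) φ.subf

/-- s̄ub(φ) = sub(φ) ∪ {¬ψ : ψ ∈ sub(φ)}. -/
def subBar (φ : Form) : Finset Form := φ.subf ∪ φ.subf.image neg

/-- □^k φ : k nested boxes. -/
def boxIter : ℕ → Form → Form
  | 0, φ => φ
  | n + 1, φ => box (boxIter n φ)

def isDia : Form → Bool
  | dia _ => true
  | _ => false

def isBox : Form → Bool
  | box _ => true
  | _ => false

end Form

/-- Big conjunction over a finite set of formulas (⋀∅ = ⊤). -/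
noncomputable def bigAnd (s : Finset Form) : Form := s.toList.foldr Form.and Form.top

/-- Big disjunction over a finite set of formulas (⋁∅ = ⊥). -/
noncomputable def bigOr (s : Finset Form) : Form := s.toList.foldr Form.or Form.bot

/-- th(a) = ⋀ a. -/
noncomputable def th (a : Finset Form) : Form := bigAnd a

/-- A finite Kripke model: a nonempty finite set of states, an accessibility
relation and a valuation. -/
structure Model : Type 1 where
  W : Type
  nonempty : Nonempty W
  finite : Finite W
  R : W → W → Prop
  V : W → Set ℕ

/-- Satisfaction M,w ⊨ φ. -/
def Model.sat (M : Model) : M.W → Form → Prop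
  | _, .bot => False
  | _, .top => True
  | w, .pos p => p ∈ M.V w
  | w, .npos p => p ∉ M.V w
  | w, .and φ ψ => M.sat w φ ∧ M.sat w ψ
  | w, .or φ ψ => M.sat w φ ∨ M.sat w ψ
  | w, .box φ => ∀ v, M.R w v → M.sat v φ
  | w, .dia φ => ∃ v, M.R w v ∧ M.sat v φ

/-- The six base logics K, D, T, K4, KD4, S4. -/
inductive BaseLogic : Type where
  | K | D | T | K4 | KD4 | S4
deriving DecidableEq

/-- A logic: a base logic, possibly extended by axiom 5. -/
structure Logic : Type where
  base : BaseLogic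
  has5 : Bool
deriving DecidableEq

def Logic.K : Logic := ⟨.K, false⟩
def Logic.D : Logic := ⟨.D, false⟩
def Logic.T : Logic := ⟨.T, false⟩
def Logic.K4 : Logic := ⟨.K4, false⟩
def Logic.KD4 : Logic := ⟨.KD4, false⟩
def Logic.S4 : Logic := ⟨.S4, false⟩

/-- l + 5. -/
def BaseLogic.plus5 (b : BaseLogic) : Logic := ⟨b, true⟩

/-- M is a model for the logic l (frame conditions). -/
def Model.IsFor (M : Model) (l : Logic) : Prop :=
  (match l.base with
    | .K => True
    | .D => ∀ w, ∃ v, M.R w v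
    | .T => ∀ w, M.R w w
    | .K4 => ∀ a b c, M.R a b → M.R b c → M.R a c
    | .KD4 => (∀ w, ∃ v, M.R w v) ∧ (∀ a b c, M.R a b → M.R b c → M.R a c)
    | .S4 => (∀ w, M.R w w) ∧ (∀ a b c, M.R a b → M.R b c → M.R a c))
  ∧ (l.has5 = true → ∀ a b c, M.R a b → M.R a c → M.R b c)

/-- φ is satisfiable for l: satisfied at some state of some finite model for l. -/
def Satisfiable (l : Logic) (φ : Form) : Prop :=
  ∃ M : Model, M.IsFor l ∧ ∃ w : M.W, M.sat w φ

/-- φ is valid for l: satisfied at every state of every finite model for l. -/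
def Valid (l : Logic) (φ : Form) : Prop :=
  ∀ M : Model, M.IsFor l → ∀ w : M.W, M.sat w φ

/-- φ is complete for l: for every ψ ∈ L(P(φ)), φ→ψ or φ→¬ψ is valid for l. -/
def Complete (l : Logic) (φ : Form) : Prop :=
  ∀ ψ : Form, ψ.vars ⊆ φ.vars → (Valid l (φ.imp ψ) ∨ Valid l (φ.imp ψ.neg))

/-- Z is a bisimulation modulo P from M to M'. -/
def IsBisim (P : Set ℕ) (M M' : Model) (Z : M.W → M'.W → Prop) : Prop :=
  (∃ s s', Z s s') ∧
  ∀ s s', Z s s' →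
    (M.V s ∩ P = M'.V s' ∩ P) ∧
    (∀ t, M.R s t → ∃ t', M'.R s' t' ∧ Z t t') ∧
    (∀ t', M'.R s' t' → ∃ t, M.R s t ∧ Z t t')

/-- (M,a) ∼_P (M',a'). -/
def Bisimilar (P : Set ℕ) (M : Model) (a : M.W) (M' : Model) (a' : M'.W) : Prop :=
  ∃ Z, IsBisim P M M' Z ∧ Z a a'

/-- (M,a) ≡_P (M',a'): the two pointed models satisfy the same formulas of L(P). -/
def EquivP (P : Set ℕ) (M : Model) (a : M.W) (M' : Model) (a' : M'.W) : Prop :=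
  ∀ φ : Form, ↑φ.vars ⊆ P → (M.sat a φ ↔ M'.sat a' φ)

/-- (M,s) is flat (for base logic l, with axiom 5): the carrier is {s}∪W and
R = R1 ∪ R2 with R1 ⊆ {s}×W, R2 an equivalence relation on W, and s ∈ W if
l ∈ {T,S4}. -/
def Flat (l : BaseLogic) (M : Model) (s : M.W) : Prop :=
  ∃ W : Set M.W, (∀ w, w = s ∨ w ∈ W) ∧
    ∃ R1 R2 : M.W → M.W → Prop,
      (∀ x y, M.R x y ↔ (R1 x y ∨ R2 x y)) ∧
      (∀ x y, R1 x y → x = s ∧ y ∈ W) ∧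
      (∀ x y, R2 x y → x ∈ W ∧ y ∈ W) ∧
      (∀ x ∈ W, R2 x x) ∧
      (∀ x y, R2 x y → R2 y x) ∧
      (∀ x y z, R2 x y → R2 y z → R2 x z) ∧
      ((l = .T ∨ l = .S4) → s ∈ W)

/-- A maximal state for l with respect to φ: a maximally l-consistent subset
of s̄ub(φ). -/
def MaxState (l : Logic) (φ : Form) (a : Finset Form) : Prop :=
  a ⊆ φ.subBar ∧ Satisfiable l (th a) ∧ ∀ ψ ∈ φ.subf, ψ ∈ a ∨ ψ.neg ∈ a

/-- D(x) = {◇ψ : ◇ψ ∈ x}. -/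
def DSet (x : Finset Form) : Finset Form := x.filter (fun ψ => ψ.isDia = true)

/-- B(x) = {□ψ : □ψ ∈ x}. -/
def BSet (x : Finset Form) : Finset Form := x.filter (fun ψ => ψ.isBox = true)

/-- A view: a parent-state and a finite set of children-states. -/
structure View : Type where
  parent : Finset Form
  children : Finset (Finset Form)

/-- The view is with respect to φ: all its states are subsets of s̄ub(φ). -/
def View.WF (φ : Form) (S : View) : Prop :=
  S.parent ⊆ φ.subBar ∧ ∀ c ∈ S.children, c ⊆ φ.subBar

/-- A set of formulas is l-closed. -/
def LClosed (l : Logic) (P : Finset ℕ) (s : Finset Form) : Prop :=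
  (∀ φ1 φ2 : Form, Form.and φ1 φ2 ∈ s → φ1 ∈ s ∧ φ2 ∈ s) ∧
  (∀ φ1 φ2 : Form, Form.or φ1 φ2 ∈ s → φ1 ∈ s ∨ φ2 ∈ s) ∧
  ((l.base = .T ∨ l.base = .S4) → ∀ ψ : Form, Form.box ψ ∈ s → ψ ∈ s) ∧
  (∀ p ∈ P, Form.pos p ∈ s ∨ Form.npos p ∈ s)

/-- The view S is l-complete. -/
def ViewLComplete (l : Logic) (P : Finset ℕ) (S : View) : Prop :=
  LClosed l P S.parent ∧
  (∀ c ∈ S.children, LClosed l P c) ∧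
  (∀ ψ : Form, Form.dia ψ ∈ S.parent → ∃ c ∈ S.children, ψ ∈ c) ∧
  (∀ ψ : Form, Form.box ψ ∈ S.parent → ∀ c ∈ S.children, ψ ∈ c) ∧
  ((l.base = .K4 ∨ l.base = .KD4 ∨ l.base = .S4) →
    ∀ ψ : Form, Form.box ψ ∈ S.parent → ∀ c ∈ S.children, Form.box ψ ∈ c) ∧
  (l.base = .KD4 → S.children.Nonempty)

/-- The view S is consistent for l: every one of its states is consistent. -/
def ViewConsistent (l : Logic) (S : View) : Prop :=
  Satisfiable l (th S.parent) ∧ ∀ c ∈ S.children, Satisfiable l (th c)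

/-- d = max{md(th(c')) : c' ∈ C(S)}. -/
noncomputable def childDepth (S : View) : ℕ := S.children.sup (fun c => (th c).md)

/-- A K-maximal child-state: a maximally K-consistent subset of s̄ub_d(φ). -/
def KMaxChild (φ : Form) (d : ℕ) (c : Finset Form) : Prop :=
  c ⊆ φ.subBar.filter (fun ψ => ψ.md ≤ d) ∧
  Satisfiable Logic.K (th c) ∧
  ∀ ψ ∈ φ.subf, ψ.md ≤ d → (ψ ∈ c ∨ ψ.neg ∈ c)

/-- S' completes S (for logic l, with respect to φ). -/
def ViewCompletes (l : Logic) (φ : Form) (S' S : View) : Prop :=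
  ViewLComplete l φ.vars S' ∧
  S.parent ⊆ S'.parent ∧
  (∀ a ∈ S.children, ∃ a' ∈ S'.children, a ⊆ a') ∧
  (l.base = .K → ∀ a' ∈ S'.children, KMaxChild φ (childDepth S') a') ∧
  (l.base ≠ .K → ∀ a' ∈ S'.children, MaxState l φ a')

/-- The depth-0 normal form ⋀_{p∈S} p ∧ ⋀_{p∈P∖S} ¬p. -/
noncomputable def nf0 (P S : Finset ℕ) : Form :=
  Form.and (bigAnd (S.image Form.pos)) (bigAnd ((P \ S).image Form.npos))

/-- Fine's normal forms F_P^d. -/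
noncomputable def NF (P : Finset ℕ) : ℕ → Set Form
  | 0 => { χ | ∃ S ⊆ P, χ = nf0 P S }
  | d + 1 => { χ | ∃ S : Finset Form, ↑S ⊆ NF P d ∧ ∃ S0 ⊆ P,
      χ = Form.and (nf0 P S0)
            (Form.and (bigAnd (S.image Form.dia)) (Form.box (bigOr S))) }

/-- φ is complete up to its depth for l. -/
def CompleteUpToDepth (l : Logic) (φ : Form) : Prop :=
  ∀ ψ : Form, ψ.vars ⊆ φ.vars → ψ.md ≤ φ.md →
    (Valid l (φ.imp ψ) ∨ Valid l (φ.imp ψ.neg))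

/-
In a serial transitive model, a state `w` satisfying `⋀P ∧ □⋀P` together with its successors
forms a set closed under transitions on which every variable of `P` is true, so `w` is bisimilar
modulo `P` to the one-point reflexive model in which exactly `P` holds; since bisimilar states satisfy the same
formulas over `P`, the truth value of every `ψ ∈ L(P)` under the hypothesis `⋀P ∧ □⋀P` is fixed.
Likewise every state of a serial model is bisimilar modulo `∅` to that one-point model, which
settles the variable-free formulas.
-/

def pointModel (Q : Set ℕ) : Model :=
  ⟨Unit, ⟨()⟩, inferInstance, fun _ _ => True, fun _ => Q⟩

lemma pointModel_isFor_KD4 (Q : Set ℕ) : (pointModel Q).IsFor Logic.KD4 :=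
  ⟨⟨fun _ => ⟨(), trivial⟩, fun _ _ _ _ _ => trivial⟩, Bool.noConfusion⟩

lemma pointModel_isFor_S4 (Q : Set ℕ) : (pointModel Q).IsFor Logic.S4 :=
  ⟨⟨fun _ => trivial, fun _ _ _ _ _ => trivial⟩, Bool.noConfusion⟩

namespace Model

variable (M : Model)

lemma serial_of_isFor_KD4 (h : M.IsFor Logic.KD4) : ∀ u, ∃ v, M.R u v := h.1.1

lemma trans_of_isFor_KD4 (h : M.IsFor Logic.KD4) : ∀ a b c, M.R a b → M.R b c → M.R a c :=
  h.1.2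

lemma serial_of_isFor_S4 (h : M.IsFor Logic.S4) : ∀ u, ∃ v, M.R u v :=
  fun u => ⟨u, h.1.1 u⟩

lemma trans_of_isFor_S4 (h : M.IsFor Logic.S4) : ∀ a b c, M.R a b → M.R b c → M.R a c :=
  h.1.2

lemma sat_neg (ψ : Form) (w : M.W) : M.sat w ψ.neg ↔ ¬ M.sat w ψ := by
  induction ψ generalizing w <;> simp [Form.neg, Model.sat, *, imp_iff_not_or]

lemma sat_imp (φ ψ : Form) (w : M.W) : M.sat w (φ.imp ψ) ↔ (M.sat w φ → M.sat w ψ) := by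
  simp only [Form.imp, Model.sat, sat_neg, imp_iff_not_or]

lemma sat_bigAnd (s : Finset Form) (w : M.W) : M.sat w (bigAnd s) ↔ ∀ χ ∈ s, M.sat w χ := by
  suffices ∀ l : List Form, M.sat w (l.foldr Form.and Form.top) ↔ ∀ χ ∈ l, M.sat w χ by
    simp [bigAnd, this]
  intro l
  induction l with
  | nil => simp [Model.sat]
  | cons χ l ih => simp [Model.sat, ih]

end Model

lemma Form.vars_neg (ψ : Form) : ψ.neg.vars = ψ.vars := by
  induction ψ <;> simp [Form.neg, Form.vars, *]

lemma vars_bigAnd_subset {s : Finset Form} {Q : Finset ℕ} (h : ∀ χ ∈ s, χ.vars ⊆ Q) :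
    (bigAnd s).vars ⊆ Q := by
  suffices ∀ l : List Form, (∀ χ ∈ l, χ.vars ⊆ Q) → (l.foldr Form.and Form.top).vars ⊆ Q from
    this _ fun χ hχ => h χ (Finset.mem_toList.mp hχ)
  intro l
  induction l with
  | nil => simp [Form.vars]
  | cons χ l ih =>
    intro hl
    simp only [List.foldr, Form.vars, Finset.union_subset_iff]
    exact ⟨hl χ (by simp), ih fun ξ hξ => hl ξ (by simp [hξ])⟩

lemma vars_bigAnd_image_pos_subset (P : Finset ℕ) : (bigAnd (P.image Form.pos)).vars ⊆ P :=
  vars_bigAnd_subset fun χ hχ => by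
    obtain ⟨p, hp, rfl⟩ := Finset.mem_image.mp hχ
    simpa [Form.vars] using hp

lemma IsBisim.sat_iff {P : Set ℕ} {M M' : Model} {Z : M.W → M'.W → Prop}
    (hZ : IsBisim P M M' Z) {ψ : Form} (hψ : ↑ψ.vars ⊆ P) {a : M.W} {a' : M'.W}
    (h : Z a a') : M.sat a ψ ↔ M'.sat a' ψ := by
  induction ψ generalizing a a' with
  | bot | top => rfl
  | pos p | npos p =>
    have hp : p ∈ P := hψ (by simp [Form.vars])
    have hV := congrArg (p ∈ ·) ((hZ.2 a a' h).1)
    simp only [Set.mem_inter_iff, hp, and_true, eq_iff_iff] at hV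
    simp [Model.sat, hV]
  | and φ χ ihφ ihχ | or φ χ ihφ ihχ =>
    simp only [Form.vars, Finset.coe_union, Set.union_subset_iff] at hψ
    simp only [Model.sat, ihφ hψ.1 h, ihχ hψ.2 h]
  | box χ ih =>
    obtain ⟨-, forth, back⟩ := hZ.2 a a' h
    refine ⟨fun ha v' hv' => ?_, fun ha' v hv => ?_⟩
    · obtain ⟨v, hv, hvv'⟩ := back v' hv'
      exact (ih hψ hvv').mp (ha v hv)
    · obtain ⟨v', hv', hvv'⟩ := forth v hv
      exact (ih hψ hvv').mpr (ha' v' hv')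
  | dia χ ih =>
    obtain ⟨-, forth, back⟩ := hZ.2 a a' h
    refine ⟨fun ⟨v, hv, hsat⟩ => ?_, fun ⟨v', hv', hsat⟩ => ?_⟩
    · obtain ⟨v', hv', hvv'⟩ := forth v hv
      exact ⟨v', hv', (ih hψ hvv').mp hsat⟩
    · obtain ⟨v, hv, hvv'⟩ := back v' hv'
      exact ⟨v, hv, (ih hψ hvv').mpr hsat⟩

lemma Bisimilar.equivP {P : Set ℕ} {M M' : Model} {a : M.W} {a' : M'.W}
    (h : Bisimilar P M a M' a') : EquivP P M a M' a' :=
  fun _ hψ => h.choose_spec.1.sat_iff hψ h.choose_spec.2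

lemma complete_of_forall_bisimilar {l : Logic} {φ : Form} {P : Set ℕ} (hP : ↑φ.vars ⊆ P)
    (N : Model) (b : N.W)
    (h : ∀ M : Model, M.IsFor l → ∀ w, M.sat w φ → Bisimilar P M w N b) : Complete l φ := by
  intro ψ hψ
  have hψP : ↑ψ.vars ⊆ P := (Finset.coe_subset.mpr hψ).trans hP
  by_cases hb : N.sat b ψ
  · refine .inl fun M hM w => (M.sat_imp _ _ w).mpr fun hw => ?_
    exact ((h M hM w hw).equivP ψ hψP).mpr hb
  · refine .inr fun M hM w => (M.sat_imp _ _ w).mpr fun hw => ?_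
    have hψP' : ↑ψ.neg.vars ⊆ P := by rwa [Form.vars_neg]
    exact ((h M hM w hw).equivP ψ.neg hψP').mpr ((N.sat_neg ψ b).mpr hb)

lemma bisimilar_pointModel {P : Set ℕ} {M : Model} (S : Set M.W)
    (hclosed : ∀ u ∈ S, ∀ v, M.R u v → v ∈ S) (hserial : ∀ u ∈ S, ∃ v, M.R u v)
    (hval : ∀ u ∈ S, P ⊆ M.V u) {w : M.W} (hw : w ∈ S) :
    Bisimilar P M w (pointModel P) () := by
  refine ⟨fun u _ => u ∈ S, ⟨⟨w, (), hw⟩, fun u _ hu => ⟨?_, ?_, ?_⟩⟩, hw⟩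
  · exact (Set.inter_eq_right.mpr (hval u hu)).trans (Set.inter_self P).symm
  · exact fun v huv => ⟨(), trivial, hclosed u hu v huv⟩
  · intro _ _
    obtain ⟨v, huv⟩ := hserial u hu
    exact ⟨v, huv, hclosed u hu v huv⟩

lemma bisimilar_pointModel_of_sat_and_box {P : Finset ℕ} {M : Model}
    (hserial : ∀ u, ∃ v, M.R u v) (htrans : ∀ a b c, M.R a b → M.R b c → M.R a c) {w : M.W}
    (hw : M.sat w (Form.and (bigAnd (P.image Form.pos)) (Form.box (bigAnd (P.image Form.pos))))) :
    Bisimilar P M w (pointModel P) () := by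
  refine bisimilar_pointModel {u | u = w ∨ M.R w u} ?_ (fun u _ => hserial u) ?_ (.inl rfl)
  · rintro u (rfl | hwu) v huv
    exacts [.inr huv, .inr (htrans w u v hwu huv)]
  · have hPu : ∀ u, M.sat u (bigAnd (P.image Form.pos)) → ↑P ⊆ M.V u := fun u hu p hp =>
      (M.sat_bigAnd _ u).mp hu (Form.pos p) (Finset.mem_image_of_mem _ hp)
    rintro u (rfl | hwu)
    exacts [hPu u hw.1, hPu u (hw.2 u hwu)]

lemma sat_pointModel_and_box (P : Finset ℕ) :
    (pointModel P).sat ()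
      (Form.and (bigAnd (P.image Form.pos)) (Form.box (bigAnd (P.image Form.pos)))) := by
  have h : (pointModel P).sat () (bigAnd (P.image Form.pos)) :=
    ((pointModel P).sat_bigAnd _ ()).mpr fun χ hχ => by
      obtain ⟨p, hp, rfl⟩ := Finset.mem_image.mp hχ
      exact hp
  exact ⟨h, fun _ _ => h⟩

lemma complete_and_box {l : Logic} (P : Finset ℕ)
    (hserial : ∀ M : Model, M.IsFor l → ∀ u, ∃ v, M.R u v)
    (htrans : ∀ M : Model, M.IsFor l → ∀ a b c, M.R a b → M.R b c → M.R a c) :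
    Complete l (Form.and (bigAnd (P.image Form.pos)) (Form.box (bigAnd (P.image Form.pos)))) :=
  complete_of_forall_bisimilar (P := P)
    (Finset.coe_subset.mpr (Finset.union_subset (vars_bigAnd_image_pos_subset P)
      (vars_bigAnd_image_pos_subset P)))
    (pointModel P) () fun M hM _ hw =>
      bisimilar_pointModel_of_sat_and_box (hserial M hM) (htrans M hM) hw

lemma complete_of_vars_eq_empty {l : Logic} {ψ : Form} (hψ : ψ.vars = ∅)
    (hserial : ∀ M : Model, M.IsFor l → ∀ u, ∃ v, M.R u v) : Complete l ψ :=
  complete_of_forall_bisimilar (P := ∅) (by simp [hψ]) (pointModel ∅) () fun M hM _ _ =>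
    bisimilar_pointModel Set.univ (fun _ _ _ _ => trivial) (fun u _ => hserial M hM u)
      (fun _ _ => Set.empty_subset _) (Set.mem_univ _)

/-- ⋀_{p∈P} p ∧ □⋀_{p∈P} p is satisfiable and complete for KD4
and S4; every formula with no propositional variables is complete for KD4
and S4. -/
theorem stmt7 (P : Finset ℕ) :
    (Satisfiable Logic.KD4
        (Form.and (bigAnd (P.image Form.pos)) (Form.box (bigAnd (P.image Form.pos)))) ∧
     Complete Logic.KD4
        (Form.and (bigAnd (P.image Form.pos)) (Form.box (bigAnd (P.image Form.pos))))) ∧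
    (Satisfiable Logic.S4
        (Form.and (bigAnd (P.image Form.pos)) (Form.box (bigAnd (P.image Form.pos)))) ∧
     Complete Logic.S4
        (Form.and (bigAnd (P.image Form.pos)) (Form.box (bigAnd (P.image Form.pos))))) ∧
    (∀ ψ : Form, ψ.vars = ∅ → Complete Logic.KD4 ψ ∧ Complete Logic.S4 ψ) :=
  ⟨⟨⟨pointModel P, pointModel_isFor_KD4 P, (), sat_pointModel_and_box P⟩,
      complete_and_box P Model.serial_of_isFor_KD4 Model.trans_of_isFor_KD4⟩,
    ⟨⟨pointModel P, pointModel_isFor_S4 P, (), sat_pointModel_and_box P⟩,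
      complete_and_box P Model.serial_of_isFor_S4 Model.trans_of_isFor_S4⟩,
    fun _ hψ => ⟨complete_of_vars_eq_empty hψ Model.serial_of_isFor_KD4,
      complete_of_vars_eq_empty hψ Model.serial_of_isFor_S4⟩⟩
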